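/- Let A = [[A₁₁, A₁₂],[A₂₁, A₂₂]] ∈ R^(l×m) be a block matrix of rank r over R = k[z₁,…,zₙ], where A₁₁ is r×r with det(A₁₁) ≠ 0, and 1 ≤ r ≤ l. If the r×m submatrix [A₁₁ A₁₂] is minor left prime (the gcd of its r×r minors is a nonzero constant), then A₂₁·A₁₁⁻¹ is a polynomial matrix (i.e., has entries in R rather than merely in the fraction field), and A = [[I_r],[A₂₁A₁₁⁻¹]]·[A₁₁ A₁₂] is a factorization of A over R. -/

import Mathlib

/-!
Over the fraction field, `rank A = r = rank A₁₁` forces every bordered `(r+1)`-minor of `A` to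
vanish; by the Schur determinant formula this is `A₂₂ = A₂₁ A₁₁⁻¹ A₁₂`, so `X = A₂₁ A₁₁⁻¹`
satisfies `X [A₁₁ A₁₂] = [A₂₁ A₂₂]`. Cramer's rule on any `r` columns of `[A₁₁ A₁₂]` shows that
the reduced denominator of each entry of `X` divides the corresponding `r × r` minor, hence their
gcd, which is a unit by minor left primeness. So `X` is a polynomial matrix.
-/

open Matrix

/-- The set of `i × i` minors of a matrix. -/
def minorsSet {R : Type*} [CommRing R] {α β : Type*} (F : Matrix α β R)
    (i : ℕ) : Set R :=
  {x | ∃ (ri : Fin i ↪ α) (ci : Fin i ↪ β), x = (F.submatrix ri ci).det}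

namespace Matrix

/-- Minor left primeness; over `k[z₁,…,zₙ]` the units are the nonzero constants, so this says the
gcd of the maximal minors is a nonzero constant. -/
def IsMinorLeftPrime {R : Type*} [CommRing R] {β : Type*} {r : ℕ} (M : Matrix (Fin r) β R) :
    Prop :=
  ∀ c : R, (∀ x ∈ minorsSet M r, c ∣ x) → IsUnit c

theorem mul_inv_mul_eq_of_rank_fromBlocks_le {K : Type*} [Field K]
    {m n p : Type*} [Fintype m] [DecidableEq m] [Fintype n]
    (A : Matrix m m K) (B : Matrix m n K) (C : Matrix p m K) (D : Matrix p n K)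
    (hA : A.det ≠ 0) (hrank : (fromBlocks A B C D).rank ≤ Fintype.card m) :
    C * A⁻¹ * B = D := by
  ext i j
  have : Invertible A := A.invertibleOfIsUnitDet hA.isUnit
  set bordered := (fromBlocks A B C D).submatrix (Sum.map id fun _ : Unit => i)
    (Sum.map id fun _ : Unit => j)
  have hbordered : bordered = fromBlocks A (B.submatrix id fun _ => j)
      (C.submatrix (fun _ => i) id) (of fun _ _ => D i j) := by
    ext (a | a) (b | b) <;> rfl
  have hdet : bordered.det = 0 := by
    by_contra h
    have hcard := (rank_of_det_ne_zero h).symm.le.trans ((rank_submatrix_le _ _ _).trans hrank)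
    simp at hcard
  rw [hbordered, det_fromBlocks₁₁] at hdet
  have hschur := (mul_eq_zero.mp hdet).resolve_left hA
  rw [det_unique, sub_apply, sub_eq_zero, invOf_eq_nonsing_inv] at hschur
  simpa [mul_apply] using hschur.symm

end Matrix

namespace IsFractionRing

variable {R K : Type*} [CommRing R] [IsDomain R] [UniqueFactorizationMonoid R]
  [Field K] [Algebra R K] [IsFractionRing R K]

theorem den_dvd_of_mul_eq {x : K} {d a : R} (h : algebraMap R K d * x = algebraMap R K a) :
    (den R x : R) ∣ d := by
  have hx : x * algebraMap R K (den R x) = algebraMap R K (num R x) :=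
    num_mul_den_eq_num_iff_eq.mpr rfl
  have hcross : d * num R x = a * den R x := by
    apply IsFractionRing.injective R K
    rw [map_mul, map_mul, ← hx, ← mul_assoc, h]
  exact (num_den_reduced R x).symm.dvd_of_dvd_mul_right ⟨a, by rw [hcross, mul_comm]⟩

theorem den_dvd_det_of_mul_map_eq {m p : Type*} [Fintype m] [DecidableEq m]
    {X : Matrix p m K} {M : Matrix m m R} {N : Matrix p m R}
    (h : X * M.map (algebraMap R K) = N.map (algebraMap R K)) (i : p) (j : m) :
    (den R (X i j) : R) ∣ M.det := by
  have hcramer : algebraMap R K M.det • X = (N * M.adjugate).map (algebraMap R K) := by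
    rw [Matrix.map_mul, ← h, Matrix.mul_assoc, ← Matrix.map_mul, mul_adjugate,
      map_smul' _ _ _ (map_mul _), Matrix.map_one _ (map_zero _) (map_one _), Matrix.mul_smul,
      Matrix.mul_one]
  exact den_dvd_of_mul_eq (congrFun (congrFun hcramer i) j)

theorem exists_map_eq_of_mul_map_eq_of_isMinorLeftPrime {r : ℕ} {β p : Type*}
    {X : Matrix p (Fin r) K} {M : Matrix (Fin r) β R} {N : Matrix p β R}
    (h : X * M.map (algebraMap R K) = N.map (algebraMap R K)) (hM : M.IsMinorLeftPrime) :
    ∃ B : Matrix p (Fin r) R, B.map (algebraMap R K) = X := by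
  have hint : ∀ i j, IsLocalization.IsInteger R (X i j) := by
    intro i j
    apply isInteger_of_isUnit_den
    apply hM
    rintro _ ⟨ri, ci, rfl⟩
    have hri : Function.Bijective ri := Finite.injective_iff_bijective.mp ri.injective
    obtain ⟨j₀, rfl⟩ := hri.surjective j
    refine den_dvd_det_of_mul_map_eq (X := X.submatrix id ri) (N := N.submatrix id ci) ?_ i j₀
    rw [← submatrix_map, ← submatrix_map, ← submatrix_mul _ _ _ _ _ hri, h]
  choose B hB using hint
  exact ⟨Matrix.of B, ext fun i j => hB i j⟩

end IsFractionRing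

theorem Matrix.exists_fromBlocks_eq_fromRows_one_mul_fromCols {R K : Type*} [CommRing R]
    [IsDomain R] [UniqueFactorizationMonoid R] [Field K] [Algebra R K] [IsFractionRing R K]
    {r : ℕ} {s t : Type*} [Fintype t] (A11 : Matrix (Fin r) (Fin r) R)
    (A12 : Matrix (Fin r) t R) (A21 : Matrix s (Fin r) R) (A22 : Matrix s t R)
    (hdet : A11.det ≠ 0) (hrank : ((fromBlocks A11 A12 A21 A22).map (algebraMap R K)).rank = r)
    (hMLP : (fromCols A11 A12).IsMinorLeftPrime) :
    ∃ B : Matrix s (Fin r) R,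
      B.map (algebraMap R K) = A21.map (algebraMap R K) * (A11.map (algebraMap R K))⁻¹ ∧
      fromBlocks A11 A12 A21 A22 = fromRows 1 B * fromCols A11 A12 := by
  have hdetK : (A11.map (algebraMap R K)).det ≠ 0 :=
    (RingHom.map_det _ A11).symm.trans_ne
      ((map_ne_zero_iff _ (IsFractionRing.injective R K)).mpr hdet)
  have hschur : A21.map (algebraMap R K) * (A11.map (algebraMap R K))⁻¹ *
      A12.map (algebraMap R K) = A22.map (algebraMap R K) :=
    mul_inv_mul_eq_of_rank_fromBlocks_le _ _ _ _ hdetK (by simp [← fromBlocks_map, hrank])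
  have hX : A21.map (algebraMap R K) * (A11.map (algebraMap R K))⁻¹ *
      (fromCols A11 A12).map (algebraMap R K) = (fromCols A21 A22).map (algebraMap R K) := by
    rw [fromCols_map, fromCols_map, mul_fromCols, nonsing_inv_mul_cancel_right _ _ hdetK.isUnit,
      hschur]
  obtain ⟨B, hB⟩ := IsFractionRing.exists_map_eq_of_mul_map_eq_of_isMinorLeftPrime hX hMLP
  have hBmul : B * fromCols A11 A12 = fromCols A21 A22 :=
    map_injective (IsFractionRing.injective R K) (by dsimp only; rw [Matrix.map_mul, hB, hX])
  refine ⟨B, hB, ?_⟩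
  rw [← fromRows_fromCols_eq_fromBlocks, fromRows_mul, Matrix.one_mul, hBmul]

theorem youla_gnavi_mlp_factorization_general
    {k : Type*} [Field k] (n r s t : ℕ)
    (A11 : Matrix (Fin r) (Fin r) (MvPolynomial (Fin n) k))
    (A12 : Matrix (Fin r) (Fin t) (MvPolynomial (Fin n) k))
    (A21 : Matrix (Fin s) (Fin r) (MvPolynomial (Fin n) k))
    (A22 : Matrix (Fin s) (Fin t) (MvPolynomial (Fin n) k))
    (hdet : A11.det ≠ 0)
    (hrank : ((fromBlocks A11 A12 A21 A22).map (algebraMap (MvPolynomial (Fin n) k)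
      (FractionRing (MvPolynomial (Fin n) k)))).rank = r)
    (hMLP : ∀ c : MvPolynomial (Fin n) k,
      (∀ x ∈ minorsSet (fromCols A11 A12) r, c ∣ x) → IsUnit c) :
    ∃ B : Matrix (Fin s) (Fin r) (MvPolynomial (Fin n) k),
      B.map (algebraMap (MvPolynomial (Fin n) k) (FractionRing (MvPolynomial (Fin n) k))) =
        (A21.map (algebraMap (MvPolynomial (Fin n) k)
          (FractionRing (MvPolynomial (Fin n) k)))) *
        (A11.map (algebraMap (MvPolynomial (Fin n) k)
          (FractionRing (MvPolynomial (Fin n) k))))⁻¹ ∧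
      fromBlocks A11 A12 A21 A22 =
        fromRows (1 : Matrix (Fin r) (Fin r) (MvPolynomial (Fin n) k)) B *
          fromCols A11 A12 :=
  exists_fromBlocks_eq_fromRows_one_mul_fromCols A11 A12 A21 A22 hdet hrank hMLP

/-- Youla–Gnavi: Let `A = [[A₁₁,A₁₂],[A₂₁,A₂₂]]` over `R = k[z₁,…,zₙ]`
(`k` algebraically closed) have rank `r`, with `A₁₁ ∈ R^(r×r)`, `det A₁₁ ≠ 0`. If
`[A₁₁ A₁₂]` is minor left prime, then `A₂₁·A₁₁⁻¹` is a polynomial matrix `B` and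
`A = [[I_r],[B]]·[A₁₁ A₁₂]`. -/
theorem youla_gnavi_mlp_factorization
    {k : Type*} [Field k] [IsAlgClosed k] (n r s t : ℕ) (hr : 1 ≤ r)
    (A11 : Matrix (Fin r) (Fin r) (MvPolynomial (Fin n) k))
    (A12 : Matrix (Fin r) (Fin t) (MvPolynomial (Fin n) k))
    (A21 : Matrix (Fin s) (Fin r) (MvPolynomial (Fin n) k))
    (A22 : Matrix (Fin s) (Fin t) (MvPolynomial (Fin n) k))
    (hdet : A11.det ≠ 0)
    (hrank : ((fromBlocks A11 A12 A21 A22).map (algebraMap (MvPolynomial (Fin n) k)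
      (FractionRing (MvPolynomial (Fin n) k)))).rank = r)
    (hMLP : ∀ c : MvPolynomial (Fin n) k,
      (∀ x ∈ minorsSet (fromCols A11 A12) r, c ∣ x) → IsUnit c) :
    ∃ B : Matrix (Fin s) (Fin r) (MvPolynomial (Fin n) k),
      B.map (algebraMap (MvPolynomial (Fin n) k) (FractionRing (MvPolynomial (Fin n) k))) =
        (A21.map (algebraMap (MvPolynomial (Fin n) k)
          (FractionRing (MvPolynomial (Fin n) k)))) *
        (A11.map (algebraMap (MvPolynomial (Fin n) k)
          (FractionRing (MvPolynomial (Fin n) k))))⁻¹ ∧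
      fromBlocks A11 A12 A21 A22 =
        fromRows (1 : Matrix (Fin r) (Fin r) (MvPolynomial (Fin n) k)) B *
          fromCols A11 A12 :=
  youla_gnavi_mlp_factorization_general n r s t A11 A12 A21 A22 hdet hrank hMLP
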